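/- arXiv:2603.27489 — 4 statements merged into one kernel-verified Lean document; each statement's English description precedes it below -/
import Mathlib

section
/- Let n > i ≥ 3 be integers, let p > 1, and let f be a positive first p-Dirichlet eigenfunction of the tadpole graph T_{n,i}, i.e. f : V(T_{n,i}) → ℝ satisfies f(t_n) = 0, f(t_k) > 0 for all 1 ≤ k ≤ n−1, and R_{p,T_{n,i}}[f] = λ_{1,p}(T_{n,i}). Then f does not achieve its maximum on the tail of T_{n,i}: for every k with i ≤ k ≤ n one has f(t_k) < max_{1 ≤ j ≤ n} f(t_j). -/
attribute [local instance] Classical.propDecidable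

open Finset

/-- The degree of a vertex `x` in a finite simple graph `G`. -/
noncomputable def deg {V : Type*} [Fintype V] (G : SimpleGraph V) (x : V) : ℕ :=
  (Finset.univ.filter (fun y => G.Adj x y)).card

/-- The `p`-energy `‖df‖_{p,G}^p = Σ_{{x,y} ∈ E(G)} |f x - f y|^p`
(each unordered edge counted once, i.e. half the double sum). -/
noncomputable def energy {V : Type*} [Fintype V] (G : SimpleGraph V) (p : ℝ) (f : V → ℝ) : ℝ :=
  (∑ x : V, ∑ y : V, if G.Adj x y then |f x - f y| ^ p else 0) / 2

/-- The weighted `p`-norm `‖f‖_{p,G}^p = Σ_x |f x|^p · deg x`. -/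
noncomputable def pnorm {V : Type*} [Fintype V] (G : SimpleGraph V) (p : ℝ) (f : V → ℝ) : ℝ :=
  ∑ x : V, |f x| ^ p * (deg G x : ℝ)

/-- The `p`-Rayleigh quotient `R_{p,G}[f]`. -/
noncomputable def rayleigh {V : Type*} [Fintype V] (G : SimpleGraph V) (p : ℝ) (f : V → ℝ) : ℝ :=
  energy G p f / pnorm G p f

/-- The first `p`-Dirichlet eigenvalue `λ_{1,p}(G)`: the infimum of Rayleigh quotients of
nonzero functions vanishing on the boundary `B(G)` (the set of pendant vertices). -/
noncomputable def lambda1 {V : Type*} [Fintype V] (G : SimpleGraph V) (p : ℝ) : ℝ :=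
  sInf { r : ℝ | ∃ f : V → ℝ, (∀ x : V, deg G x = 1 → f x = 0) ∧ f ≠ 0 ∧ r = rayleigh G p f }

/-- The number of edges with exactly one endpoint in `U`. -/
noncomputable def cutCard {V : Type*} [Fintype V] (G : SimpleGraph V) (U : Finset V) : ℕ :=
  ∑ x ∈ U, (Finset.univ.filter (fun y => G.Adj x y ∧ y ∉ U)).card

/-- The Dirichlet Cheeger constant `h_D(G)`. -/
noncomputable def cheeger {V : Type*} [Fintype V] (G : SimpleGraph V) : ℝ :=
  sInf { r : ℝ | ∃ U : Finset V, U.Nonempty ∧ (∀ x ∈ U, deg G x ≠ 1) ∧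
    r = (cutCard G U : ℝ) / ∑ x ∈ U, (deg G x : ℝ) }

/-- The tadpole graph `T_{n,i}` on vertices `0, …, n-1` (vertex `k-1` representing `t_k`):
edges between consecutive vertices together with the edge `t_1 ∼ t_i`. -/
def tadpole (n i : ℕ) : SimpleGraph (Fin n) :=
  SimpleGraph.fromRel (fun a b => b.val = a.val + 1 ∨ (a.val = 0 ∧ b.val = i - 1))

/-- The path graph on `n` vertices. -/
def pathG (n : ℕ) : SimpleGraph (Fin n) :=
  SimpleGraph.fromRel (fun a b => b.val = a.val + 1)

/-!
Perturbing the eigenfunction `f` at a single interior vertex gives the Euler–Lagrange equation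
`Δ_p f = λ · φ_p(f) · deg` there, where `φ_p(s) = |s|^{p-2} s` and
`Δ_p f (x) = Σ_{y ∼ x} φ_p(f x - f y)`. As `f > 0` and `λ > 0`, `Δ_p f > 0` at every interior
vertex. Summing `Δ_p f` over a set `U` of interior vertices, the terms of edges inside `U` cancel,
so some edge leaving `U` has `f` dropping along it. For a tail vertex `t`, let `U` be the vertices
before `t` (in the order `t_1, …, t_n`): every edge leaving `U` ends at `t`, so `f t` is smaller
than some value of `f`.
-/

noncomputable def phi (p s : ℝ) : ℝ := |s| ^ (p - 2) * s

theorem phi_neg (p s : ℝ) : phi p (-s) = -phi p s := by simp [phi]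

theorem phi_pos_iff {p s : ℝ} : 0 < phi p s ↔ 0 < s := by
  rcases eq_or_ne s 0 with rfl | hs
  · simp [phi]
  · exact mul_pos_iff_of_pos_left (Real.rpow_pos_of_pos (abs_pos.2 hs) _)

theorem hasDerivAt_abs_add_mul_rpow {p : ℝ} (hp : 1 < p) (a c : ℝ) :
    HasDerivAt (fun t => |a + t * c| ^ p) (p * phi p a * c) 0 := by
  have hlin : HasDerivAt (fun t : ℝ => a + t * c) c 0 := by
    simpa using ((hasDerivAt_id (0 : ℝ)).mul_const c).const_add a
  have := (hasDerivAt_abs_rpow (a + 0 * c) hp).comp 0 hlin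
  simpa [phi, Function.comp_def, mul_assoc] using this

section Antisymmetric

variable {ι : Type*}

theorem Finset.sum_sum_eq_zero_of_antisymm (s : Finset ι) {a : ι → ι → ℝ}
    (ha : ∀ u v, a v u = -a u v) : ∑ u ∈ s, ∑ v ∈ s, a u v = 0 := by
  have h : ∑ u ∈ s, ∑ v ∈ s, a u v = -∑ u ∈ s, ∑ v ∈ s, a u v := by
    conv_lhs => rw [Finset.sum_comm]
    simp only [← sum_neg_distrib]
    exact sum_congr rfl fun u _ => sum_congr rfl fun v _ => ha u v
  linarith

theorem Finset.sum_sum_mul_sub_of_antisymm [Fintype ι] {a : ι → ι → ℝ}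
    (ha : ∀ u v, a v u = -a u v) (e : ι → ℝ) :
    ∑ u, ∑ v, a u v * (e u - e v) = 2 * ∑ u, (∑ v, a u v) * e u := by
  have h : ∑ u, ∑ v, a u v * e v = -∑ u, ∑ v, a u v * e u := by
    rw [Finset.sum_comm]
    simp only [← sum_neg_distrib]
    refine sum_congr rfl fun u _ => sum_congr rfl fun v _ => ?_
    rw [ha u v, neg_mul]
  simp only [mul_sub, sum_sub_distrib, h, sum_mul]
  ring

end Antisymmetric

section Graph

variable {V : Type*} [Fintype V] {G : SimpleGraph V} {p : ℝ} {f : V → ℝ}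

noncomputable def pLaplacian (G : SimpleGraph V) (p : ℝ) (f : V → ℝ) (u : V) : ℝ :=
  ∑ v, if G.Adj u v then phi p (f u - f v) else 0

omit [Fintype V] in
theorem adj_phi_antisymm (u v : V) :
    (if G.Adj v u then phi p (f v - f u) else 0)
      = -(if G.Adj u v then phi p (f u - f v) else 0) := by
  rw [G.adj_comm, ← neg_sub (f u), phi_neg]
  split_ifs <;> simp

theorem energy_nonneg (G : SimpleGraph V) (p : ℝ) (f : V → ℝ) : 0 ≤ energy G p f :=
  div_nonneg (sum_nonneg fun _ _ => sum_nonneg fun _ _ => by split_ifs <;> positivity) zero_le_two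

theorem pnorm_nonneg (G : SimpleGraph V) (p : ℝ) (f : V → ℝ) : 0 ≤ pnorm G p f :=
  sum_nonneg fun _ _ => by positivity

theorem energy_pos_of_adj {a b : V} (hab : G.Adj a b) (hf : f a ≠ f b) : 0 < energy G p f := by
  have hterm : ∀ u v, 0 ≤ if G.Adj u v then |f u - f v| ^ p else 0 := fun _ _ => by
    split_ifs <;> positivity
  refine div_pos (sum_pos' (fun u _ => sum_nonneg fun v _ => hterm u v)
    ⟨a, mem_univ a, sum_pos' (fun v _ => hterm a v) ⟨b, mem_univ b, ?_⟩⟩) two_pos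
  rw [if_pos hab]
  exact Real.rpow_pos_of_pos (abs_pos.2 (sub_ne_zero.2 hf)) _

theorem pnorm_pos {a : V} (ha : 0 < deg G a) (hf : f a ≠ 0) : 0 < pnorm G p f :=
  sum_pos' (fun _ _ => by positivity)
    ⟨a, mem_univ a, mul_pos (Real.rpow_pos_of_pos (abs_pos.2 hf) _) (Nat.cast_pos.2 ha)⟩

theorem lambda1_le_rayleigh {g : V → ℝ} (hg : ∀ x, deg G x = 1 → g x = 0) (hg0 : g ≠ 0) :
    lambda1 G p ≤ rayleigh G p g := by
  refine csInf_le ⟨0, ?_⟩ ⟨g, hg, hg0, rfl⟩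
  rintro r ⟨h, -, -, rfl⟩
  exact div_nonneg (energy_nonneg G p h) (pnorm_nonneg G p h)

theorem lambda1_mul_pnorm_le_energy (hp : p ≠ 0) {g : V → ℝ}
    (hg : ∀ x, deg G x = 1 → g x = 0) :
    lambda1 G p * pnorm G p g ≤ energy G p g := by
  rcases (pnorm_nonneg G p g).eq_or_lt with h | h
  · rw [← h, mul_zero]
    exact energy_nonneg G p g
  · have hg0 : g ≠ 0 := by
      rintro rfl
      simp [pnorm, Real.zero_rpow hp] at h
    exact (le_div_iff₀ h).1 (lambda1_le_rayleigh hg hg0)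

theorem hasDerivAt_energy_add_mul (hp : 1 < p) (f e : V → ℝ) :
    HasDerivAt (fun t => energy G p (fun u => f u + t * e u))
      (p * ∑ u, pLaplacian G p f u * e u) 0 := by
  have hterm : ∀ u v, HasDerivAt
      (fun t => if G.Adj u v then |f u + t * e u - (f v + t * e v)| ^ p else 0)
      (p * ((if G.Adj u v then phi p (f u - f v) else 0) * (e u - e v))) 0 := by
    intro u v
    by_cases hadj : G.Adj u v
    · simp only [hadj, if_true, show ∀ t, f u + t * e u - (f v + t * e v)
        = f u - f v + t * (e u - e v) from fun t => by ring]
      exact (hasDerivAt_abs_add_mul_rpow hp (f u - f v) (e u - e v)).congr_deriv (by ring)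
    · simpa [hadj] using hasDerivAt_const (0 : ℝ) (0 : ℝ)
  refine ((HasDerivAt.fun_sum (u := univ) fun u _ =>
    HasDerivAt.fun_sum (u := univ) fun v _ => hterm u v).div_const 2).congr_deriv ?_
  simp only [← mul_sum]
  rw [sum_sum_mul_sub_of_antisymm adj_phi_antisymm]
  simp only [pLaplacian]
  ring

theorem hasDerivAt_pnorm_add_mul (hp : 1 < p) (f e : V → ℝ) :
    HasDerivAt (fun t => pnorm G p (fun u => f u + t * e u))
      (p * ∑ u, phi p (f u) * deg G u * e u) 0 := by
  have hterm : ∀ u, HasDerivAt (fun t => |f u + t * e u| ^ p * deg G u)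
      (p * (phi p (f u) * deg G u * e u)) 0 := fun u =>
    ((hasDerivAt_abs_add_mul_rpow hp (f u) (e u)).mul_const (deg G u : ℝ)).congr_deriv (by ring)
  exact (HasDerivAt.fun_sum (u := univ) fun u _ => hterm u).congr_deriv (mul_sum ..).symm

theorem pLaplacian_eq_of_rayleigh_eq_lambda1 (hp : 1 < p) (hf : ∀ v, deg G v = 1 → f v = 0)
    (hN : pnorm G p f ≠ 0) (heig : rayleigh G p f = lambda1 G p) {x : V} (hx : deg G x ≠ 1) :
    pLaplacian G p f x = lambda1 G p * phi p (f x) * deg G x := by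
  set e : V → ℝ := fun u => if u = x then 1 else 0
  -- `f + t e` stays admissible as `x` is not pendant, so `E - λ N ≥ 0` on it, with equality at 0.
  have hmin : IsLocalMin (fun t => energy G p (fun u => f u + t * e u)
      - lambda1 G p * pnorm G p (fun u => f u + t * e u)) 0 := by
    refine Filter.Eventually.of_forall fun t => ?_
    have hE : energy G p f = lambda1 G p * pnorm G p f := (div_eq_iff hN).1 heig
    simp only [zero_mul, add_zero, hE, sub_self, sub_nonneg]
    refine lambda1_mul_pnorm_le_energy (by linarith) fun v hv => ?_
    simp [e, hf v hv, show v ≠ x by rintro rfl; exact hx hv]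
  have hderiv := hmin.hasDerivAt_eq_zero
    ((hasDerivAt_energy_add_mul hp f e).sub ((hasDerivAt_pnorm_add_mul hp f e).const_mul _))
  simp only [e, mul_ite, mul_one, mul_zero, sum_ite_eq', mem_univ, if_true] at hderiv
  have hp0 : p ≠ 0 := by linarith
  apply mul_left_cancel₀ hp0
  linear_combination hderiv

theorem sum_pLaplacian_eq_sum_compl (U : Finset V) :
    ∑ u ∈ U, pLaplacian G p f u
      = ∑ u ∈ U, ∑ v ∈ Uᶜ, if G.Adj u v then phi p (f u - f v) else 0 := by
  simp only [pLaplacian, ← sum_add_sum_compl U, sum_add_distrib,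
    sum_sum_eq_zero_of_antisymm U adj_phi_antisymm, zero_add]

theorem exists_adj_lt_of_pLaplacian_pos {U : Finset V} (hU : U.Nonempty)
    (hpos : ∀ u ∈ U, 0 < pLaplacian G p f u) :
    ∃ u ∈ U, ∃ v ∉ U, G.Adj u v ∧ f v < f u := by
  by_contra! hmono
  have hcut : ∑ u ∈ U, ∑ v ∈ Uᶜ, (if G.Adj u v then phi p (f u - f v) else 0) ≤ 0 :=
    sum_nonpos fun u hu => sum_nonpos fun v hv => by
      split_ifs with hadj
      · exact not_lt.1 fun h => (hmono u hu v (mem_compl.1 hv) hadj).not_gt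
          (sub_pos.1 (phi_pos_iff.1 h))
      · exact le_rfl
  rw [← sum_pLaplacian_eq_sum_compl] at hcut
  exact hcut.not_gt (sum_pos hpos hU)

end Graph

section Tadpole

variable {n i : ℕ}

theorem tadpole_adj {a b : Fin n} :
    (tadpole n i).Adj a b ↔ a.val ≠ b.val ∧ (b.val = a.val + 1 ∨ a.val = b.val + 1 ∨
      (a.val = 0 ∧ b.val = i - 1) ∨ (b.val = 0 ∧ a.val = i - 1)) := by
  simp only [tadpole, SimpleGraph.fromRel_adj, ne_eq, Fin.ext_iff]
  tauto

theorem two_le_deg_tadpole (hi : 3 ≤ i) (hin : i ≤ n) {x : Fin n} (hx : x.val < n - 1) :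
    2 ≤ deg (tadpole n i) x := by
  obtain ⟨a, b, hab, ha, hb⟩ :
      ∃ a b : Fin n, a ≠ b ∧ (tadpole n i).Adj x a ∧ (tadpole n i).Adj x b := by
    by_cases h0 : x.val = 0
    · refine ⟨⟨1, by omega⟩, ⟨i - 1, by omega⟩, ?_, ?_, ?_⟩ <;>
        simp [Fin.ext_iff, tadpole_adj] <;> omega
    · refine ⟨⟨x.val - 1, by omega⟩, ⟨x.val + 1, by omega⟩, ?_, ?_, ?_⟩ <;>
        simp [Fin.ext_iff, tadpole_adj]
      omega
  calc 2 = ({a, b} : Finset (Fin n)).card := (card_pair hab).symm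
    _ ≤ deg (tadpole n i) x := card_le_card fun y hy => by
      rcases mem_insert.1 hy with rfl | hy
      · simpa using ha
      · simpa [mem_singleton.1 hy] using hb

theorem tadpole_adj_val_eq_of_lt_le {k : ℕ} (hk : i - 1 ≤ k) {x v : Fin n}
    (hadj : (tadpole n i).Adj x v) (hx : x.val < k) (hv : k ≤ v.val) : v.val = k := by
  rw [tadpole_adj] at hadj
  omega

theorem pLaplacian_tadpole_pos (hi : 3 ≤ i) (hin : i < n) {p : ℝ} (hp : 1 < p)
    {f : Fin n → ℝ} (hbd : f ⟨n - 1, Nat.sub_one_lt_of_lt hin⟩ = 0)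
    (hpos : ∀ j : Fin n, j.val < n - 1 → 0 < f j)
    (heig : rayleigh (tadpole n i) p f = lambda1 (tadpole n i) p) {x : Fin n}
    (hx : x.val < n - 1) : 0 < pLaplacian (tadpole n i) p f x := by
  have hdeg : ∀ y : Fin n, y.val < n - 1 → 2 ≤ deg (tadpole n i) y :=
    fun y => two_le_deg_tadpole hi hin.le
  have hf : ∀ y, deg (tadpole n i) y = 1 → f y = 0 := fun y hy => by
    have hy' : y = ⟨n - 1, by omega⟩ := Fin.ext <| show y.val = n - 1 by
      by_contra h
      have := hdeg y (by omega)
      omega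
    rw [hy', hbd]
  have h0 : (⟨0, by omega⟩ : Fin n).val < n - 1 := by simp only; omega
  have hN : 0 < pnorm (tadpole n i) p f :=
    pnorm_pos (by have := hdeg _ h0; omega) (hpos _ h0).ne'
  have hlast : (⟨n - 2, by omega⟩ : Fin n).val < n - 1 := by simp only; omega
  have hE : 0 < energy (tadpole n i) p f :=
    energy_pos_of_adj (a := ⟨n - 2, by omega⟩) (b := ⟨n - 1, by omega⟩)
      (by simp only [tadpole_adj]; omega)
      (by rw [hbd]; exact (hpos _ hlast).ne')
  have hlam : 0 < lambda1 (tadpole n i) p := heig ▸ div_pos hE hN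
  have h2 := hdeg x hx
  rw [pLaplacian_eq_of_rayleigh_eq_lambda1 hp hf hN.ne' heig (by omega)]
  exact mul_pos (mul_pos hlam (phi_pos_iff.2 (hpos x hx))) (by positivity)

end Tadpole

/-- A positive first `p`-Dirichlet eigenfunction of the tadpole graph `T_{n,i}` does not
achieve its maximum on the tail `t_i ∼ t_{i+1} ∼ ⋯ ∼ t_n` (vertex `k-1` represents `t_k`). -/
theorem max_not_on_tail (n i : ℕ) (hi : 3 ≤ i) (hin : i < n)
    (p : ℝ) (hp : 1 < p) (f : Fin n → ℝ)
    (hbd : f ⟨n - 1, by omega⟩ = 0)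
    (hpos : ∀ j : Fin n, j.val < n - 1 → 0 < f j)
    (heig : rayleigh (tadpole n i) p f = lambda1 (tadpole n i) p) :
    ∀ j : Fin n, i - 1 ≤ j.val →
      f j < Finset.univ.sup' (Finset.univ_nonempty_iff.mpr ⟨⟨0, by omega⟩⟩) f := by
  intro j hj
  have hU : (univ.filter fun y : Fin n => y.val < j.val).Nonempty :=
    ⟨⟨0, by omega⟩, by simp only [mem_filter, mem_univ, true_and]; omega⟩
  obtain ⟨x, hx, v, hv, hadj, hlt⟩ := exists_adj_lt_of_pLaplacian_pos hU fun x hx =>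
    pLaplacian_tadpole_pos hi hin hp hbd hpos heig
      (by simp only [mem_filter, mem_univ, true_and] at hx; omega)
  simp only [mem_filter, mem_univ, true_and, not_lt] at hx hv
  obtain rfl : v = j := Fin.ext (tadpole_adj_val_eq_of_lt_le hj hadj hx hv)
  exact hlt.trans_le (le_sup' f (mem_univ x))
end

section
/- For every integer n ≥ 4 and every real p > 1, λ_{1,p}(P_n) > λ_{1,p}(P_{n+1}), where P_m denotes the path graph on m vertices. -/
attribute [local instance] Classical.propDecidable

open Finset

/-!
Write an admissible function on `P_n` as a sequence `a 0, …, a (n-1)` with `a 0 = a (n-1) = 0`.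
Replacing `a` by `|a|` and repeating its entry of largest modulus `M` gives an admissible function
on `P_{n+1}` with no larger energy, while the norm `2 S = 2 Σ |a k|^p` grows by `2 M^p ≥ 2 S / n`.
Hence `λ(P_{n+1}) ≤ n/(n+1) · λ(P_n)`. The inequality is strict because `λ(P_n) > 0`: telescoping
from the boundary gives `M ≤ Σ |a k - a (k+1)|`, so every Rayleigh quotient on `P_n` is at least
`1 / (2 n (n-1)^p)`.
-/

def VanishesOnBoundary {V : Type*} [Fintype V] (G : SimpleGraph V) (f : V → ℝ) : Prop :=
  ∀ x, deg G x = 1 → f x = 0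

section Rayleigh

variable {V W : Type*} [Fintype V] [Fintype W] {G : SimpleGraph V} {H : SimpleGraph W} {p : ℝ}

lemma rayleigh_nonneg (G : SimpleGraph V) (p : ℝ) (f : V → ℝ) : 0 ≤ rayleigh G p f := by
  unfold rayleigh energy pnorm
  refine div_nonneg (div_nonneg (sum_nonneg fun x _ => sum_nonneg fun y _ => ?_) zero_le_two)
    (sum_nonneg fun x _ => by positivity)
  split_ifs <;> positivity

lemma le_lambda1 {ε : ℝ} (hne : ∃ f, VanishesOnBoundary G f ∧ f ≠ 0)
    (h : ∀ f, VanishesOnBoundary G f → f ≠ 0 → ε ≤ rayleigh G p f) : ε ≤ lambda1 G p := by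
  obtain ⟨f, hf, hf0⟩ := hne
  exact le_csInf ⟨_, f, hf, hf0, rfl⟩ (by rintro _ ⟨f, hf, hf0, rfl⟩; exact h f hf hf0)

lemma lambda1_le_mul {c : ℝ} (hc : 0 < c) (hne : ∃ f, VanishesOnBoundary G f ∧ f ≠ 0)
    (h : ∀ f, VanishesOnBoundary G f → f ≠ 0 →
      ∃ g, VanishesOnBoundary H g ∧ g ≠ 0 ∧ rayleigh H p g ≤ c * rayleigh G p f) :
    lambda1 H p ≤ c * lambda1 G p := by
  rw [← div_le_iff₀' hc]
  refine le_lambda1 hne fun f hf hf0 => ?_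
  obtain ⟨g, hg, hg0, hle⟩ := h f hf hf0
  have hbdd : BddBelow {r | ∃ g, VanishesOnBoundary H g ∧ g ≠ 0 ∧ r = rayleigh H p g} :=
    ⟨0, by rintro _ ⟨g, -, -, rfl⟩; exact rayleigh_nonneg H p g⟩
  rw [div_le_iff₀' hc]
  exact (csInf_le hbdd ⟨g, hg, hg0, rfl⟩).trans hle

lemma pnorm_eq_two_mul_sum (hp : p ≠ 0) (hdeg : ∀ x, deg G x = 1 ∨ deg G x = 2) {f : V → ℝ}
    (hf : VanishesOnBoundary G f) : pnorm G p f = 2 * ∑ x, |f x| ^ p := by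
  rw [pnorm, mul_sum]
  refine sum_congr rfl fun x _ => ?_
  rcases hdeg x with h | h
  · simp [hf x h, Real.zero_rpow hp]
  · rw [h]; push_cast; ring

end Rayleigh

def duplicateAt {α : Type*} (j : ℕ) (a : ℕ → α) (k : ℕ) : α :=
  if k ≤ j then a k else a (k - 1)

lemma sum_range_succ_duplicateAt {α M : Type*} [AddCommMonoid M] (D : α → α → M) (a : ℕ → α)
    {j m : ℕ} (hjm : j ≤ m) :
    ∑ k ∈ range (m + 1), D (duplicateAt j a k) (duplicateAt j a (k + 1)) =
      ∑ k ∈ range m, D (a k) (a (k + 1)) + D (a j) (a j) := by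
  induction m, hjm using Nat.le_induction with
  | base =>
    rw [sum_range_succ]
    congr 1
    · exact sum_congr rfl fun k hk => by
        have := mem_range.1 hk
        simp only [duplicateAt, if_pos this.le, if_pos (show k + 1 ≤ j by omega)]
    · simp [duplicateAt]
  | succ m hjm ih =>
    rw [sum_range_succ, ih, sum_range_succ]
    simp only [duplicateAt, if_neg (show ¬ m + 1 ≤ j by omega),
      if_neg (show ¬ m + 1 + 1 ≤ j by omega), Nat.add_sub_cancel]
    abel

lemma rpow_sum_le_card_rpow_mul_sum_rpow {ι : Type*} {s : Finset ι} (hs : s.Nonempty)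
    {t : ι → ℝ} (ht : ∀ i ∈ s, 0 ≤ t i) {p : ℝ} (hp : 0 ≤ p) :
    (∑ i ∈ s, t i) ^ p ≤ (#s : ℝ) ^ p * ∑ i ∈ s, t i ^ p := by
  obtain ⟨i, hi, hmax⟩ := s.exists_max_image t hs
  calc (∑ i ∈ s, t i) ^ p ≤ (#s * t i) ^ p := by
        gcongr
        · exact sum_nonneg ht
        · simpa using sum_le_card_nsmul s t (t i) hmax
    _ = (#s : ℝ) ^ p * t i ^ p := Real.mul_rpow (by positivity) (ht i hi)
    _ ≤ (#s : ℝ) ^ p * ∑ i ∈ s, t i ^ p := by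
        gcongr
        exact single_le_sum (fun j hj => Real.rpow_nonneg (ht j hj) p) hi

lemma exists_abs_max_pos {n : ℕ} {a : ℕ → ℝ} (ha : (fun x : Fin n => a x) ≠ 0) :
    ∃ j < n, 0 < |a j| ∧ ∀ k < n, |a k| ≤ |a j| := by
  obtain ⟨x, hx⟩ := Function.ne_iff.1 ha
  obtain ⟨j, hj, hmax⟩ := (range n).exists_max_image (|a ·|) ⟨x, mem_range.2 x.isLt⟩
  exact ⟨j, mem_range.1 hj, (abs_pos.2 hx).trans_le (hmax x (mem_range.2 x.isLt)),
    fun k hk => hmax k (mem_range.2 hk)⟩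

lemma sum_range_rpow_abs_le {n : ℕ} {p M : ℝ} (hp : 0 ≤ p) {a : ℕ → ℝ}
    (h : ∀ k < n, |a k| ≤ M) : ∑ k ∈ range n, |a k| ^ p ≤ n * M ^ p := by
  simpa using sum_le_card_nsmul (range n) _ (M ^ p) fun k hk =>
    Real.rpow_le_rpow (abs_nonneg _) (h k (mem_range.1 hk)) hp

lemma exists_eq_comp_val {n : ℕ} (f : Fin n → ℝ) : ∃ a : ℕ → ℝ, f = fun x : Fin n => a x :=
  ⟨fun k => if h : k < n then f ⟨k, h⟩ else 0, funext fun x => by simp [x.isLt]⟩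

section PathGraph

variable {n : ℕ} {p : ℝ} {a : ℕ → ℝ}

lemma pathG_adj (x y : Fin n) : (pathG n).Adj x y ↔ y.val = x.val + 1 ∨ x.val = y.val + 1 := by
  simp only [pathG, SimpleGraph.fromRel_adj, ne_eq, Fin.ext_iff]
  omega

lemma card_filter_val_eq (c : ℕ) :
    #{y : Fin n | y.val = c} = if c < n then 1 else 0 := by
  split_ifs with h
  · exact card_eq_one.2 ⟨⟨c, h⟩, by ext y; simp [Fin.ext_iff]⟩
  · exact card_eq_zero.2 (filter_eq_empty_iff.2 fun y _ hy => h (hy ▸ y.isLt))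

lemma deg_pathG (x : Fin n) :
    deg (pathG n) x = (if x.val + 1 < n then 1 else 0) + (if x.val ≠ 0 then 1 else 0) := by
  have hsplit : univ.filter (fun y => (pathG n).Adj x y) =
      univ.filter (fun y : Fin n => y.val = x.val + 1) ∪
        univ.filter (fun y : Fin n => y.val = x.val - 1 ∧ x.val ≠ 0) := by
    ext y; simp only [mem_filter, mem_union, mem_univ, true_and, pathG_adj]; omega
  rw [deg, hsplit, card_union_of_disjoint (disjoint_filter.2 fun y _ h1 h2 => by omega),
    card_filter_val_eq]
  by_cases hx : x.val = 0
  · simp [hx]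
  · simp only [hx, ne_eq, not_false_eq_true, and_true, card_filter_val_eq]
    simp [show x.val - 1 < n by omega]

lemma deg_pathG_eq_one_iff (hn : 2 ≤ n) (x : Fin n) :
    deg (pathG n) x = 1 ↔ x.val = 0 ∨ x.val = n - 1 := by
  have := x.isLt
  rw [deg_pathG]; split_ifs <;> omega

lemma deg_pathG_eq_one_or_two (hn : 2 ≤ n) (x : Fin n) :
    deg (pathG n) x = 1 ∨ deg (pathG n) x = 2 := by
  rw [deg_pathG]; split_ifs <;> omega

lemma vanishesOnBoundary_pathG_iff (hn : 2 ≤ n) :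
    VanishesOnBoundary (pathG n) (fun x => a x) ↔ a 0 = 0 ∧ a (n - 1) = 0 := by
  simp only [VanishesOnBoundary, deg_pathG_eq_one_iff hn]
  refine ⟨fun h => ⟨h ⟨0, by omega⟩ (.inl rfl), h ⟨n - 1, by omega⟩ (.inr rfl)⟩, ?_⟩
  rintro ⟨h0, h1⟩ x (hx | hx) <;> simp [hx, h0, h1]

lemma energy_pathG :
    energy (pathG n) p (fun x => a x) = ∑ k ∈ range (n - 1), |a k - a (k + 1)| ^ p := by
  set t : ℕ → ℕ → ℝ := fun i j => |a i - a j| ^ p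
  have ht : ∀ i j, t i j = t j i := fun i j => by simp only [t, abs_sub_comm]
  have hsplit : ∀ i j, (if j = i + 1 ∨ i = j + 1 then t i j else 0) =
      (if j = i + 1 then t i j else 0) + (if i = j + 1 then t j i else 0) := by
    intro i j; rw [ht j i]; split_ifs <;> first | omega | simp
  have hsum : ∑ i ∈ range n, ∑ j ∈ range n, (if j = i + 1 then t i j else 0) =
      ∑ k ∈ range (n - 1), t k (k + 1) := by
    simp only [sum_ite_eq', mem_range, ← sum_filter]
    congr 1; ext k; simp only [mem_filter, mem_range]; omega
  have hrange : (∑ x : Fin n, ∑ y : Fin n,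
      if (pathG n).Adj x y then |a x - a y| ^ p else 0) =
      ∑ i ∈ range n, ∑ j ∈ range n, if j = i + 1 ∨ i = j + 1 then t i j else 0 := by
    simp only [pathG_adj, ← Fin.sum_univ_eq_sum_range]
    rfl
  rw [energy, hrange]
  simp only [hsplit, sum_add_distrib]
  rw [sum_comm (f := fun i j => if i = j + 1 then t j i else 0), hsum]
  ring

lemma rayleigh_pathG (hn : 2 ≤ n) (hp : p ≠ 0) (ha : VanishesOnBoundary (pathG n) (fun x => a x)) :
    rayleigh (pathG n) p (fun x => a x) =
      (∑ k ∈ range (n - 1), |a k - a (k + 1)| ^ p) / (2 * ∑ k ∈ range n, |a k| ^ p) := by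
  rw [rayleigh, energy_pathG, pnorm_eq_two_mul_sum hp (deg_pathG_eq_one_or_two hn) ha,
    Fin.sum_univ_eq_sum_range (fun k => |a k| ^ p)]

lemma one_div_le_rayleigh_pathG (hn : 2 ≤ n) (hp : 0 < p)
    (ha : VanishesOnBoundary (pathG n) (fun x => a x)) (ha0 : (fun x : Fin n => a x) ≠ 0) :
    1 / (2 * n * ((n - 1 : ℕ) : ℝ) ^ p) ≤ rayleigh (pathG n) p (fun x => a x) := by
  obtain ⟨a0, -⟩ := (vanishesOnBoundary_pathG_iff hn).1 ha
  obtain ⟨j, hj, hpos, hmax⟩ := exists_abs_max_pos ha0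
  set E := ∑ k ∈ range (n - 1), |a k - a (k + 1)| ^ p
  set S := ∑ k ∈ range n, |a k| ^ p
  have hjE : |a j| ≤ ∑ k ∈ range (n - 1), |a k - a (k + 1)| := calc
    |a j| = dist (a 0) (a j) := by rw [Real.dist_eq, a0, zero_sub, abs_neg]
    _ ≤ ∑ k ∈ range j, dist (a k) (a (k + 1)) := dist_le_range_sum_dist a j
    _ ≤ _ := sum_le_sum_of_subset_of_nonneg (range_subset_range.2 (by omega))
        fun _ _ _ => dist_nonneg
  have hME : |a j| ^ p ≤ ((n - 1 : ℕ) : ℝ) ^ p * E := by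
    have := rpow_sum_le_card_rpow_mul_sum_rpow (nonempty_range_iff.2 (by omega : n - 1 ≠ 0))
      (fun k _ => abs_nonneg (a k - a (k + 1))) hp.le
    rw [card_range] at this
    exact (Real.rpow_le_rpow (abs_nonneg _) hjE hp.le).trans this
  have hS0 : 0 < S := (Real.rpow_pos_of_pos hpos p).trans_le
    (single_le_sum (f := fun k => |a k| ^ p) (fun k _ => by positivity) (mem_range.2 hj))
  have hn1 : (0 : ℝ) < (n - 1 : ℕ) := Nat.cast_pos.2 (by omega)
  rw [rayleigh_pathG hn hp.ne' ha, div_le_div_iff₀ (by positivity) (by positivity)]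
  calc 1 * (2 * S) ≤ 2 * (n * |a j| ^ p) := by linarith [sum_range_rpow_abs_le hp.le hmax]
    _ ≤ 2 * (n * (((n - 1 : ℕ) : ℝ) ^ p * E)) := by gcongr
    _ = E * (2 * n * ((n - 1 : ℕ) : ℝ) ^ p) := by ring

lemma exists_rayleigh_pathG_succ_le (hn : 2 ≤ n) (hp : 0 < p)
    (ha : VanishesOnBoundary (pathG n) (fun x => a x)) (ha0 : (fun x : Fin n => a x) ≠ 0) :
    ∃ g : Fin (n + 1) → ℝ, VanishesOnBoundary (pathG (n + 1)) g ∧ g ≠ 0 ∧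
      rayleigh (pathG (n + 1)) p g ≤ n / (n + 1) * rayleigh (pathG n) p (fun x => a x) := by
  obtain ⟨a0, an⟩ := (vanishesOnBoundary_pathG_iff hn).1 ha
  obtain ⟨j, hj, hpos, hmax⟩ := exists_abs_max_pos ha0
  set b := duplicateAt j (fun k => |a k|)
  have hb : VanishesOnBoundary (pathG (n + 1)) (fun x => b x) :=
    (vanishesOnBoundary_pathG_iff (a := b) (by omega)).2
      ⟨by simp [b, duplicateAt, a0], by simp [b, duplicateAt, show ¬ n ≤ j by omega, an]⟩
  refine ⟨fun x => b x, hb, fun h => ?_, ?_⟩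
  · have := congrFun h ⟨j, by omega⟩
    simp only [b, duplicateAt, le_refl, if_true, Pi.zero_apply] at this
    exact hpos.ne' this
  have hE : ∑ k ∈ range (n + 1 - 1), |b k - b (k + 1)| ^ p ≤
      ∑ k ∈ range (n - 1), |a k - a (k + 1)| ^ p := by
    rw [show n + 1 - 1 = n - 1 + 1 by omega,
      sum_range_succ_duplicateAt (fun x y => |x - y| ^ p) _ (by omega : j ≤ n - 1)]
    simp only [sub_self, abs_zero, Real.zero_rpow hp.ne', add_zero]
    exact sum_le_sum fun k _ =>
      Real.rpow_le_rpow (abs_nonneg _) (abs_abs_sub_abs_le_abs_sub _ _) hp.le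
  have hS : ∑ k ∈ range (n + 1), |b k| ^ p = ∑ k ∈ range n, |a k| ^ p + |a j| ^ p := by
    simpa using sum_range_succ_duplicateAt (fun x _ => |x| ^ p) (fun k => |a k|) hj.le
  have hS0 : 0 < ∑ k ∈ range n, |a k| ^ p := (Real.rpow_pos_of_pos hpos p).trans_le
    (single_le_sum (f := fun k => |a k| ^ p) (fun k _ => by positivity) (mem_range.2 hj))
  have hSM := sum_range_rpow_abs_le hp.le hmax
  have hE0 : 0 ≤ ∑ k ∈ range (n - 1), |a k - a (k + 1)| ^ p := sum_nonneg fun k _ => by positivity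
  have hn0 : (0 : ℝ) < n := Nat.cast_pos.2 (by omega)
  rw [rayleigh_pathG (by omega) hp.ne' hb, rayleigh_pathG hn hp.ne' ha, hS]
  set E := ∑ k ∈ range (n - 1), |a k - a (k + 1)| ^ p
  set S := ∑ k ∈ range n, |a k| ^ p
  calc _ ≤ E / (2 * (S + |a j| ^ p)) := by gcongr
    _ ≤ E / (2 * (S * (n + 1) / n)) := by
      gcongr
      rw [div_le_iff₀ hn0]
      linarith
    _ = n / (n + 1) * (E / (2 * S)) := by field_simp

end PathGraph

/-- For `n ≥ 4` and `p > 1`, `λ_{1,p}(P_n) > λ_{1,p}(P_{n+1})` for path graphs. -/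
theorem path_comparison (n : ℕ) (hn : 4 ≤ n) (p : ℝ) (hp : 1 < p) :
    lambda1 (pathG (n + 1)) p < lambda1 (pathG n) p := by
  have hp0 : 0 < p := by linarith
  have hne : ∃ f, VanishesOnBoundary (pathG n) f ∧ f ≠ 0 := by
    set δ : ℕ → ℝ := fun k => if k = 1 then 1 else 0
    refine ⟨fun x : Fin n => δ x, (vanishesOnBoundary_pathG_iff (a := δ) (by omega)).2 ?_,
      fun h => ?_⟩
    · exact ⟨if_neg (by omega), if_neg (by omega)⟩
    · simpa [δ] using congrFun h ⟨1, by omega⟩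
  have hpos : 0 < lambda1 (pathG n) p := by
    have hn1 : (0 : ℝ) < (n - 1 : ℕ) := Nat.cast_pos.2 (by omega)
    have hε : 0 < 1 / (2 * n * ((n - 1 : ℕ) : ℝ) ^ p) := by positivity
    refine hε.trans_le (le_lambda1 hne fun f hf hf0 => ?_)
    obtain ⟨a, rfl⟩ := exists_eq_comp_val f
    exact one_div_le_rayleigh_pathG (by omega) hp0 hf hf0
  have hle : lambda1 (pathG (n + 1)) p ≤ n / (n + 1) * lambda1 (pathG n) p := by
    refine lambda1_le_mul (by positivity) hne fun f hf hf0 => ?_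
    obtain ⟨a, rfl⟩ := exists_eq_comp_val f
    exact exists_rayleigh_pathG_succ_le (by omega) hp0 hf hf0
  calc _ ≤ _ := hle
    _ < _ := mul_lt_of_lt_one_left hpos ((div_lt_one (by positivity)).2 (by linarith))
end

section
/- Let G be a connected finite simple graph with n edges, with B(G) ≠ ∅ and Ω(G) ≠ ∅. Then h_D(G) ≥ 1/(2n − 1), and equality holds if and only if G has exactly one pendant vertex. -/
attribute [local instance] Classical.propDecidable

open Finset

/-! Let `B` be the set of pendant vertices and `U` a nonempty set of interior vertices. Since `U`
misses a pendant vertex, connectivity yields a cut edge, so the cut of `U` is at least `1`; and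
the volume of `U` plus the volume `|B|` of `B` is at most `2n`. Hence every Cheeger ratio is at
least `1 / (2n - |B|)`, which exceeds `1 / (2n - 1)` as soon as `|B| ≥ 2`. When `B = {b}`, the
whole interior `V \ {b}` has exactly one cut edge and volume `2n - 1`, so the bound is attained. -/

namespace SimpleGraph

variable {V : Type*} [Fintype V] (G : SimpleGraph V)

noncomputable def pendants : Finset V := univ.filter fun x => deg G x = 1

lemma deg_eq_degree (x : V) : deg G x = G.degree x := by
  rw [deg, ← card_neighborFinset_eq_degree]
  congr 1
  ext y
  simp

lemma sum_deg : ∑ x, deg G x = 2 * #G.edgeFinset := by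
  simp only [deg_eq_degree, sum_degrees_eq_twice_card_edges]

lemma sum_deg_add_card_pendants_le {U : Finset V} (hU : ∀ x ∈ U, deg G x ≠ 1) :
    ∑ x ∈ U, deg G x + #G.pendants ≤ 2 * #G.edgeFinset := by
  have hdisj : Disjoint U G.pendants :=
    Finset.disjoint_left.mpr fun _ hxU hxB => hU _ hxU (mem_filter.mp hxB).2
  have hsum : ∑ x ∈ G.pendants, deg G x = #G.pendants := by
    rw [card_eq_sum_ones]
    exact sum_congr rfl fun x hx => (mem_filter.mp hx).2
  calc ∑ x ∈ U, deg G x + #G.pendants = ∑ x ∈ U ∪ G.pendants, deg G x := by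
        rw [sum_union hdisj, hsum]
    _ ≤ ∑ x, deg G x := sum_le_sum_of_subset (subset_univ _)
    _ = 2 * #G.edgeFinset := G.sum_deg

lemma cutCard_le_sum_deg (U : Finset V) : cutCard G U ≤ ∑ x ∈ U, deg G x :=
  sum_le_sum fun _ _ =>
    card_le_card fun _ hy => mem_filter.mpr ⟨mem_univ _, (mem_filter.mp hy).2.1⟩

lemma cutCard_compl_singleton (b : V) : cutCard G {b}ᶜ = deg G b := by
  have hcut : ∀ x ∈ ({b}ᶜ : Finset V),
      #(univ.filter fun y => G.Adj x y ∧ y ∉ ({b}ᶜ : Finset V)) =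
        if G.Adj b x then 1 else 0 := by
    intro x _
    split_ifs with h
    · exact card_eq_one.mpr ⟨b, by ext y; simp; rintro rfl; exact h.symm⟩
    · exact card_eq_zero.mpr (by ext y; aesop (add norm G.adj_comm))
  rw [cutCard, sum_congr rfl hcut, sum_boole, Nat.cast_id, deg]
  congr 1
  ext x
  simp only [mem_filter, mem_compl, mem_singleton, mem_univ, true_and, and_iff_right_iff_imp]
  rintro h rfl
  exact G.loopless.irrefl _ h

variable {G}

lemma Connected.one_le_cutCard (hconn : G.Connected) {U : Finset V} {u v : V} (hu : u ∈ U)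
    (hv : v ∉ U) : 1 ≤ cutCard G U := by
  obtain ⟨p⟩ := hconn.preconnected u v
  obtain ⟨d, -, hd₁, hd₂⟩ := p.exists_boundary_dart U hu hv
  calc 1 ≤ #(univ.filter fun y => G.Adj d.fst y ∧ y ∉ U) :=
        card_pos.mpr ⟨d.snd, mem_filter.mpr ⟨mem_univ _, d.adj, hd₂⟩⟩
    _ ≤ cutCard G U := single_le_sum (f := fun x => #(univ.filter fun y => G.Adj x y ∧ y ∉ U))
        (fun _ _ => Nat.zero_le _) hd₁

lemma cheeger_le {U : Finset V} (hU : U.Nonempty) (hUΩ : ∀ x ∈ U, deg G x ≠ 1) :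
    cheeger G ≤ (cutCard G U : ℝ) / ∑ x ∈ U, (deg G x : ℝ) :=
  csInf_le ⟨0, by rintro r ⟨U, -, -, rfl⟩; positivity⟩ ⟨U, hU, hUΩ, rfl⟩

lemma le_cheeger {c : ℝ} (hΩ : ∃ x, deg G x ≠ 1)
    (h : ∀ U : Finset V, U.Nonempty → (∀ x ∈ U, deg G x ≠ 1) →
      c ≤ (cutCard G U : ℝ) / ∑ x ∈ U, (deg G x : ℝ)) :
    c ≤ cheeger G := by
  obtain ⟨w, hw⟩ := hΩ
  refine le_csInf ⟨_, {w}, singleton_nonempty w, by simpa using hw, rfl⟩ ?_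
  rintro r ⟨U, hU, hUΩ, rfl⟩
  exact h U hU hUΩ

lemma Connected.one_div_le_cheeger (hconn : G.Connected) {b : V} (hb : deg G b = 1)
    (hΩ : ∃ x, deg G x ≠ 1) :
    1 / (2 * (#G.edgeFinset : ℝ) - #G.pendants) ≤ cheeger G := by
  refine le_cheeger hΩ fun U ⟨u, hu⟩ hUΩ => ?_
  have hcut := hconn.one_le_cutCard hu fun hbU => hUΩ b hbU hb
  have hvol := G.cutCard_le_sum_deg U
  have hvol' := G.sum_deg_add_card_pendants_le hUΩ
  have hcut' : (1 : ℝ) ≤ cutCard G U := by exact_mod_cast hcut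
  have hvol₁ : (1 : ℝ) ≤ ∑ x ∈ U, (deg G x : ℝ) := by exact_mod_cast hcut.trans hvol
  have hvol₂ : ∑ x ∈ U, (deg G x : ℝ) ≤ 2 * #G.edgeFinset - #G.pendants := by
    rw [le_sub_iff_add_le]; exact_mod_cast hvol'
  calc 1 / (2 * (#G.edgeFinset : ℝ) - #G.pendants) ≤ 1 / ∑ x ∈ U, (deg G x : ℝ) :=
        one_div_le_one_div_of_le (by linarith) hvol₂
    _ ≤ (cutCard G U : ℝ) / ∑ x ∈ U, (deg G x : ℝ) := by gcongr

lemma Connected.card_pendants_lt (hconn : G.Connected) {b : V} (hb : deg G b = 1)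
    (hΩ : ∃ x, deg G x ≠ 1) : #G.pendants < 2 * #G.edgeFinset := by
  obtain ⟨w, hw⟩ := hΩ
  have hwΩ : ∀ x ∈ ({w} : Finset V), deg G x ≠ 1 := by simpa using hw
  have hcut := hconn.one_le_cutCard (mem_singleton_self w) fun hbw => hwΩ b hbw hb
  have hvol := G.cutCard_le_sum_deg {w}
  have hvol' := G.sum_deg_add_card_pendants_le hwΩ
  omega

lemma cheeger_le_of_card_pendants_eq_one (h : #G.pendants = 1) (hΩ : ∃ x, deg G x ≠ 1) :
    cheeger G ≤ 1 / (2 * (#G.edgeFinset : ℝ) - 1) := by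
  obtain ⟨b, hB⟩ := card_eq_one.mp h
  have hbB : b ∈ G.pendants := hB ▸ mem_singleton_self b
  have hb : deg G b = 1 := (mem_filter.mp hbB).2
  have hΩ' : ∀ x ∈ ({b}ᶜ : Finset V), deg G x ≠ 1 := fun x hx hx1 =>
    mem_compl.mp hx (hB ▸ mem_filter.mpr ⟨mem_univ x, hx1⟩)
  obtain ⟨w, hw⟩ := hΩ
  have hvol : ∑ x ∈ ({b}ᶜ : Finset V), (deg G x : ℝ) = 2 * #G.edgeFinset - 1 := by
    have h := sum_add_sum_compl {b} fun x => (deg G x : ℝ)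
    rw [sum_singleton, hb, ← Nat.cast_sum, ← Nat.cast_sum, sum_deg] at h
    push_cast at h
    linarith
  calc cheeger G ≤ (cutCard G {b}ᶜ : ℝ) / ∑ x ∈ ({b}ᶜ : Finset V), (deg G x : ℝ) :=
        cheeger_le ⟨w, mem_compl.mpr fun hwb => hw (mem_singleton.mp hwb ▸ hb)⟩ hΩ'
    _ = 1 / (2 * (#G.edgeFinset : ℝ) - 1) := by rw [cutCard_compl_singleton, hb, hvol]; simp

end SimpleGraph

/-- For a connected finite simple graph `G` with `n` edges, nonempty boundary and nonempty
interior, `h_D(G) ≥ 1/(2n-1)`, with equality iff `G` has exactly one pendant vertex. -/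
theorem cheeger_lower_bound {V : Type*} [Fintype V] (G : SimpleGraph V)
    (hconn : G.Connected) (n : ℕ) (hedges : G.edgeFinset.card = n)
    (hB : ∃ x : V, deg G x = 1) (hΩ : ∃ x : V, deg G x ≠ 1) :
    1 / (2 * (n : ℝ) - 1) ≤ cheeger G ∧
      (cheeger G = 1 / (2 * (n : ℝ) - 1) ↔
        (Finset.univ.filter (fun x : V => deg G x = 1)).card = 1) := by
  subst hedges
  obtain ⟨b, hb⟩ := hB
  change _ ∧ (_ ↔ #G.pendants = 1)
  have hB₁ : 1 ≤ #G.pendants := card_pos.mpr ⟨b, mem_filter.mpr ⟨mem_univ b, hb⟩⟩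
  have hB₁' : (1 : ℝ) ≤ #G.pendants := by exact_mod_cast hB₁
  have hlt : (#G.pendants : ℝ) < 2 * #G.edgeFinset := by
    exact_mod_cast hconn.card_pendants_lt hb hΩ
  have hbound := hconn.one_div_le_cheeger hb hΩ
  have hmono :
      1 / (2 * (#G.edgeFinset : ℝ) - 1) ≤ 1 / (2 * (#G.edgeFinset : ℝ) - #G.pendants) :=
    one_div_le_one_div_of_le (by linarith) (by linarith)
  refine ⟨hmono.trans hbound, fun heq => ?_, fun hone => ?_⟩
  · by_contra hne
    have hB₂ : (2 : ℝ) ≤ #G.pendants := by exact_mod_cast (by omega : 2 ≤ #G.pendants)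
    have : 1 / (2 * (#G.edgeFinset : ℝ) - 1) < 1 / (2 * (#G.edgeFinset : ℝ) - #G.pendants) :=
      one_div_lt_one_div_of_lt (by linarith) (by linarith)
    linarith
  · exact le_antisymm (SimpleGraph.cheeger_le_of_card_pendants_eq_one hone hΩ)
      (hmono.trans hbound)
end

section
/- Let G be a connected finite simple graph with n edges and B(G) ≠ ∅, and let v_i, v_{i+1}, …, v_n (for some index i with 1 ≤ i < n) be distinct vertices of G with v_k adjacent to v_{k+1} for i ≤ k ≤ n−1, such that v_n ∈ B(G) and v_{i+1}, …, v_{n−1} ∈ Ω(G). Then Σ_{k=i+1}^{n−1} (deg(v_k) − 2) + Σ_{x ∈ Ω(G) \ {v_{i+1}, …, v_{n−1}}} deg(x) = 2(i + 1) − |B(G)| ≤ 2i + 1. -/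
attribute [local instance] Classical.propDecidable

open Finset

/-- Degree-counting identity: if `G` is connected with `n` edges and nonempty boundary,
and `v_i, …, v_n` are distinct vertices forming a path with `v_n` a pendant vertex and
`v_{i+1}, …, v_{n-1}` interior vertices, then
`Σ_{k=i+1}^{n-1} (deg v_k - 2) + Σ_{x ∈ Ω(G) \ {v_{i+1},…,v_{n-1}}} deg x
  = 2(i+1) - |B(G)| ≤ 2i + 1`. -/
theorem degree_counting {V : Type*} [Fintype V] (G : SimpleGraph V)
    (hconn : G.Connected) (n : ℕ) (hedges : G.edgeFinset.card = n)
    (hB : ∃ x : V, deg G x = 1)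
    (i : ℕ) (hi1 : 1 ≤ i) (hin : i < n) (v : ℕ → V)
    (hinj : ∀ k ∈ Finset.Icc i n, ∀ l ∈ Finset.Icc i n, v k = v l → k = l)
    (hadj : ∀ k, i ≤ k → k < n → G.Adj (v k) (v (k + 1)))
    (hvn : deg G (v n) = 1)
    (hint : ∀ k ∈ Finset.Icc (i + 1) (n - 1), deg G (v k) ≠ 1) :
    (∑ k ∈ Finset.Icc (i + 1) (n - 1), ((deg G (v k) : ℤ) - 2)) +
        ∑ x ∈ (Finset.univ.filter (fun x : V => deg G x ≠ 1)) \
            ((Finset.Icc (i + 1) (n - 1)).image v), (deg G x : ℤ) =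
      2 * (i + 1) - ((Finset.univ.filter (fun x : V => deg G x = 1)).card : ℤ) ∧
    2 * ((i : ℤ) + 1) - ((Finset.univ.filter (fun x : V => deg G x = 1)).card : ℤ) ≤
      2 * i + 1 := by
  classical
  set B := (Finset.univ.filter (fun x : V => deg G x = 1)) with hBdef
  set Om := (Finset.univ.filter (fun x : V => deg G x ≠ 1)) with hOmdef
  set S := ((Finset.Icc (i + 1) (n - 1)).image v) with hSdef
  have hdeg : ∀ x : V, deg G x = G.degree x := by
    intro x
    unfold deg
    rw [SimpleGraph.degree]
    congr 1
    ext y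
    simp [SimpleGraph.mem_neighborFinset]
  have hsum : ∑ x : V, (deg G x : ℤ) = 2 * n := by
    have := G.sum_degrees_eq_twice_card_edges
    rw [hedges] at this
    simp_rw [hdeg]
    exact_mod_cast this
  have hsub : Finset.Icc (i+1) (n-1) ⊆ Finset.Icc i n := by
    intro k hk; simp only [Finset.mem_Icc] at *; omega
  have hinjOn : ∀ a ∈ Finset.Icc (i+1) (n-1), ∀ b ∈ Finset.Icc (i+1) (n-1), v a = v b → a = b :=
    fun a ha b hb hab => hinj a (hsub ha) b (hsub hb) hab
  have hScard : S.card = n - i - 1 := by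
    rw [hSdef, Finset.card_image_of_injOn hinjOn, Nat.card_Icc]
    omega
  have hSsum : ∑ x ∈ S, (deg G x : ℤ) = ∑ k ∈ Finset.Icc (i+1) (n-1), (deg G (v k) : ℤ) := by
    rw [hSdef, Finset.sum_image hinjOn]
  have hSOm : S ⊆ Om := by
    intro x hx
    rw [hSdef] at hx
    obtain ⟨k, hk, rfl⟩ := Finset.mem_image.mp hx
    simp only [hOmdef, Finset.mem_filter, Finset.mem_univ, true_and]
    exact hint k hk
  have hsplit : ∑ x ∈ Om \ S, (deg G x : ℤ) + ∑ x ∈ S, (deg G x : ℤ)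
      = ∑ x ∈ Om, (deg G x : ℤ) := Finset.sum_sdiff hSOm
  have hpart : ∑ x ∈ B, (deg G x : ℤ) + ∑ x ∈ Om, (deg G x : ℤ) = 2 * n := by
    rw [hBdef, hOmdef, Finset.sum_filter_add_sum_filter_not Finset.univ
      (fun x : V => deg G x = 1) (fun x : V => (deg G x : ℤ))]
    exact hsum
  have hBsum : ∑ x ∈ B, (deg G x : ℤ) = B.card := by
    rw [Finset.card_eq_sum_ones, Nat.cast_sum]
    apply Finset.sum_congr rfl
    intro x hx
    simp only [hBdef, Finset.mem_filter] at hx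
    simp [hx.2]
  have hIccsum : ∑ k ∈ Finset.Icc (i+1) (n-1), ((deg G (v k) : ℤ) - 2)
      = (∑ k ∈ Finset.Icc (i+1) (n-1), (deg G (v k) : ℤ)) - 2 * ((n : ℤ) - i - 1) := by
    rw [Finset.sum_sub_distrib, Finset.sum_const, Nat.card_Icc]
    have : ((n - 1 + 1 - (i + 1) : ℕ) : ℤ) = (n : ℤ) - i - 1 := by omega
    rw [nsmul_eq_mul, this]; ring
  have hbpos : (1 : ℤ) ≤ B.card := by
    have : v n ∈ B := by
      simp only [hBdef, Finset.mem_filter, Finset.mem_univ, true_and]; exact hvn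
    have := Finset.card_pos.mpr ⟨v n, this⟩
    exact_mod_cast this
  constructor
  · rw [hIccsum, ← hSsum]
    have hni : (i : ℤ) < n := by exact_mod_cast hin
    linarith [hsplit, hpart, hBsum]
  · linarith [hbpos]
end
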